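/- arXiv:2011.12742 — 6 statements merged into one kernel-verified Lean document; each statement's English description precedes it below -/
import Mathlib

section
/- For a word w over an ordered alphabet with |w| > 1, the following are equivalent: (i) w < vu for every non-trivial factorisation w = uv; (ii) w < v for every proper non-empty suffix v of w. -/
/-!
Write `w = u ++ v`. A suffix `v` with `w < v` gives `w < v ++ u` at once, since enlarging the
right-hand side keeps it above `w`. Conversely, suppose every rotation of `w` lies above `w` but
some proper suffix `v` satisfies `v < w`. Were the first difference between `v` and `w` inside
`v`, it would also give `v ++ u < u ++ v`, contradicting `w < v ++ u`. So `w = v ++ t`; cancelling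
`v` in `v ++ t < v ++ u` gives `t < u`, and as `t` and `u` have the same length this yields
`t ++ v < u ++ v = w`, contradicting that the rotation `t ++ v` lies above `w`.
-/

namespace List

variable {α : Type*} {r : α → α → Prop}

theorem Lex.isPrefix_or_forall_append {x y : List α} (h : Lex r x y) :
    x <+: y ∨ ∀ s t : List α, Lex r (x ++ s) (y ++ t) := by
  induction h with
  | nil => exact Or.inl nil_prefix
  | cons _ ih =>
    rcases ih with ⟨t, rfl⟩ | ih
    · exact Or.inl ⟨t, rfl⟩
    · exact Or.inr fun s t => (ih s t).cons
  | rel h => exact Or.inr fun _ _ => .rel h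

theorem lex_append_left_iff [Std.Irrefl r] (s : List α) {t₁ t₂ : List α} :
    Lex r (s ++ t₁) (s ++ t₂) ↔ Lex r t₁ t₂ := by
  induction s with
  | nil => rfl
  | cons a s ih => exact lex_cons_iff.trans ih

theorem Lex.append_append_of_length_eq [Std.Irrefl r] {x y : List α} (h : Lex r x y)
    (hlen : x.length = y.length) (s t : List α) : Lex r (x ++ s) (y ++ t) := by
  rcases h.isPrefix_or_forall_append with hpre | happ
  · cases hpre.eq_of_length hlen
    exact absurd h (lex_irrefl irrefl x)
  · exact happ s t

variable [Std.Asymm r]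

theorem not_lex_of_forall_lex_rotate {u v : List α} (hu : u ≠ []) (hv : v ≠ [])
    (hrot : ∀ x y : List α, x ≠ [] → y ≠ [] → x ++ y = u ++ v → Lex r (u ++ v) (y ++ x)) :
    ¬Lex r v (u ++ v) := by
  intro hv_lt_w
  have hw_lt_vu : Lex r (u ++ v) (v ++ u) := hrot u v hu hv rfl
  rcases hv_lt_w.isPrefix_or_forall_append with ⟨t, ht⟩ | happ
  · have ht_ne : t ≠ [] := by
      rintro rfl
      exact hu (by simpa using ht)
    have hw_lt_tv : Lex r (u ++ v) (t ++ v) := hrot v t hv ht_ne ht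
    rw [← ht, lex_append_left_iff] at hw_lt_vu
    have hlen : t.length = u.length := by
      have := congrArg length ht
      simp only [length_append] at this
      omega
    exact asymm hw_lt_tv (hw_lt_vu.append_append_of_length_eq hlen v v)
  · exact asymm hw_lt_vu (by simpa using happ u [])

theorem lex_suffix_of_forall_lex_rotate [Std.Trichotomous r] {u v : List α} (hu : u ≠ [])
    (hv : v ≠ [])
    (hrot : ∀ x y : List α, x ≠ [] → y ≠ [] → x ++ y = u ++ v → Lex r (u ++ v) (y ++ x)) :
    Lex r (u ++ v) v := by
  rcases trichotomous_of (Lex r) (u ++ v) v with hlt | heq | hgt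
  · exact hlt
  · exact absurd heq.symm (by simpa using hu)
  · exact absurd hgt (not_lex_of_forall_lex_rotate hu hv hrot)

end List

theorem lyndon_rotation_iff_suffix_general {α : Type*} [LinearOrder α]
    (w : List α) :
    (∀ u v : List α, u ≠ [] → v ≠ [] → u ++ v = w → List.Lex (· < ·) w (v ++ u)) ↔
    (∀ v : List α, v ≠ [] → v ≠ w → v <:+ w → List.Lex (· < ·) w v) := by
  constructor
  · rintro hrot v hv hvw ⟨u, rfl⟩
    have hu : u ≠ [] := by
      rintro rfl
      exact hvw rfl
    exact List.lex_suffix_of_forall_lex_rotate hu hv hrot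
  · rintro hsuf u v hu hv rfl
    have hvw : v ≠ u ++ v := by simpa using hu
    exact (hsuf v hv hvw ⟨u, rfl⟩).append_right _ u

/-- For a word `w` with `|w| > 1` over an ordered alphabet, the following are
equivalent: (i) `w < v ++ u` for every non-trivial factorisation `w = u ++ v`;
(ii) `w < v` for every proper non-empty suffix `v` of `w`. -/
theorem lyndon_rotation_iff_suffix {α : Type*} [LinearOrder α]
    (w : List α) (hw : 1 < w.length) :
    (∀ u v : List α, u ≠ [] → v ≠ [] → u ++ v = w → List.Lex (· < ·) w (v ++ u)) ↔
    (∀ v : List α, v ≠ [] → v ≠ w → v <:+ w → List.Lex (· < ·) w v) :=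
  lyndon_rotation_iff_suffix_general w
end

section
/- For a word w over an ordered alphabet with |w| > 1, w is a Lyndon word (w < v for every proper non-empty suffix v) if and only if u^∞ < w^∞ for every proper non-empty prefix u of w, where x^∞ denotes the infinite periodic word with period x compared lexicographically. -/
variable {α : Type*} [LinearOrder α] [Inhabited α]

/-- A Lyndon word: a non-empty word strictly lexicographically smaller than
all its proper non-empty suffixes. -/
def IsLyndon (w : List α) : Prop :=
  w ≠ [] ∧ ∀ v : List α, v ≠ [] → v ≠ w → v <:+ w → List.Lex (· < ·) w v

/-- `wpow x k` is the word `x` repeated `k` times. -/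
def wpow (x : List α) (k : ℕ) : List α := (List.replicate k x).flatten

/-- `infWord x` is the infinite word `x^∞` (junk value if `x = []`). -/
def infWord (x : List α) : ℕ → α := fun i => x.getD (i % x.length) default

/-- Strict lexicographic order on infinite words. -/
def InfLt (f g : ℕ → α) : Prop := ∃ n, (∀ i < n, f i = g i) ∧ f n < g n

/-- The infinite ordering `≺` on non-empty words. -/
def Prec (u v : List α) : Prop :=
  InfLt (infWord u) (infWord v) ∨ (infWord u = infWord v ∧ v.length < u.length)

/-- `u` is strongly less than `v`: they share a common prefix followed by
strictly comparable letters. -/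
def StrongLt (u v : List α) : Prop :=
  ∃ (p s t : List α) (a b : α), a < b ∧ u = p ++ a :: s ∧ v = p ++ b :: t


/-!
Write `f = w^∞` and `σᵏ f = fun i => f (k + i)`, and fix `0 < k < |w|`. The word `u = w.take k`
has `k`-periodic `u^∞` agreeing with `f` on `[0, k)`, so `u^∞` first differs from `f` exactly
`k` places after `f` first differs from `σᵏ f`, in the same direction: `u^∞ < f ↔ f < σᵏ f`.
On the other side, `w < w.drop k` says that `f` and `σᵏ f` first differ, in favour of `σᵏ f`,
before position `m = |w| - k`. If `f < σᵏ f` but the first difference comes at or after `m`,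
shifting both sides by `m` gives `σᵐ f < σᵐ (σᵏ f) = f`, contradicting `f < σᵐ f`.
-/

section Shift

variable {α : Type*}

def shift (k : ℕ) (f : ℕ → α) : ℕ → α := fun i => f (k + i)

@[simp]
lemma shift_apply (k : ℕ) (f : ℕ → α) (i : ℕ) : shift k f i = f (k + i) := rfl

lemma shift_shift (k m : ℕ) (f : ℕ → α) : shift m (shift k f) = shift (k + m) f := by
  funext i
  simp only [shift_apply, Nat.add_assoc]

lemma forall_lt_eq_iff_of_periodic {f g : ℕ → α} {k n : ℕ} (hk : 0 < k)
    (hg : ∀ i, g (k + i) = g i) (hgf : ∀ i < k, g i = f i) :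
    (∀ i < k + n, g i = f i) ↔ ∀ i < n, f i = shift k f i := by
  constructor
  · intro h i hi
    rw [shift_apply, ← h i (by omega), ← h (k + i) (by omega), hg]
  · intro h i
    induction i using Nat.strong_induction_on with
    | _ i ih =>
      intro hi
      by_cases hik : i < k
      · exact hgf i hik
      · obtain ⟨j, rfl⟩ := Nat.exists_eq_add_of_le (not_lt.1 hik)
        rw [hg, ih j (by omega) (by omega), h j (by omega), shift_apply]

end Shift

section InfLt

variable {α : Type*} [LinearOrder α]

lemma infLt_iff_toLex_lt {f g : ℕ → α} : InfLt f g ↔ toLex f < toLex g := Iff.rfl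

lemma InfLt.asymm {f g : ℕ → α} (h : InfLt f g) : ¬ InfLt g f :=
  lt_asymm (infLt_iff_toLex_lt.1 h)

lemma InfLt.shift_of_le {f g : ℕ → α} {n m : ℕ} (hfg : ∀ i < n, f i = g i) (hn : f n < g n)
    (hm : m ≤ n) : InfLt (shift m f) (shift m g) :=
  ⟨n - m, fun i hi => hfg _ (by omega), by simpa [Nat.add_sub_cancel' hm] using hn⟩

lemma infLt_iff_of_periodic {f g : ℕ → α} {k : ℕ} (hk : 0 < k) (hg : ∀ i, g (k + i) = g i)
    (hgf : ∀ i < k, g i = f i) :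
    InfLt g f ↔ InfLt f (shift k f) := by
  constructor
  · rintro ⟨n, hn, hlt⟩
    have hkn : k ≤ n := not_lt.1 fun hnk => hlt.ne (hgf n hnk)
    obtain ⟨j, rfl⟩ := Nat.exists_eq_add_of_le hkn
    refine ⟨j, (forall_lt_eq_iff_of_periodic hk hg hgf).1 hn, ?_⟩
    rwa [shift_apply, ← hn j (by omega), ← hg]
  · rintro ⟨n, hn, hlt⟩
    have hagree := (forall_lt_eq_iff_of_periodic hk hg hgf).2 hn
    refine ⟨k + n, hagree, ?_⟩
    rwa [hg, hagree n (by omega)]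

end InfLt

section Lyndon

variable {α : Type*} [LinearOrder α]

lemma isLyndon_iff_forall_lt_drop {w : List α} (hw : w ≠ []) :
    IsLyndon w ↔ ∀ k, 0 < k → k < w.length → w < w.drop k := by
  refine ⟨fun ⟨_, h⟩ k hk hkw => h _ ?_ ?_ (List.drop_suffix k w), fun h => ⟨hw, ?_⟩⟩
  · simpa using hkw
  · intro hdrop
    have := congrArg List.length hdrop
    simp only [List.length_drop] at this
    omega
  · intro v hv hvw hsuf
    have hvw' : v.length < w.length :=
      lt_of_le_of_ne hsuf.length_le fun hlen => hvw (hsuf.eq_of_length hlen)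
    rw [List.suffix_iff_eq_drop] at hsuf
    rw [hsuf]
    have hv' := List.length_pos_iff.2 hv
    exact h _ (by omega) (by omega)

end Lyndon

section InfWord

variable {α : Type*} [Inhabited α]

lemma infWord_of_lt {x : List α} {i : ℕ} (hi : i < x.length) : infWord x i = x[i] := by
  simp [infWord, Nat.mod_eq_of_lt hi, List.getElem?_eq_getElem hi]

lemma infWord_length_add (x : List α) (i : ℕ) : infWord x (x.length + i) = infWord x i := by
  simp [infWord, Nat.add_mod_left]

lemma shift_length_infWord (x : List α) : shift x.length (infWord x) = infWord x :=
  funext (infWord_length_add x)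

lemma infWord_take_of_lt {w : List α} {k i : ℕ} (hkw : k ≤ w.length) (hi : i < k) :
    infWord (w.take k) i = infWord w i := by
  rw [infWord_of_lt (by simp; omega), infWord_of_lt (by omega), List.getElem_take]

end InfWord

lemma infLt_infWord_take_iff {w : List α} {k : ℕ} (hk : 0 < k) (hkw : k ≤ w.length) :
    InfLt (infWord (w.take k)) (infWord w) ↔ InfLt (infWord w) (shift k (infWord w)) := by
  refine infLt_iff_of_periodic hk (fun i => ?_) (fun i hi => infWord_take_of_lt hkw hi)
  simpa [hkw] using infWord_length_add (w.take k) i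

lemma lt_drop_iff {w : List α} {k : ℕ} :
    w < w.drop k ↔ ∃ n, k + n < w.length ∧ (∀ i < n, infWord w i = shift k (infWord w) i) ∧
      infWord w n < shift k (infWord w) n := by
  have hlen : ¬ w.length < w.length - k := by omega
  rw [List.lt_iff_exists]
  simp only [hlen, and_false, false_or, List.length_drop, List.getElem_drop, shift_apply]
  constructor
  · rintro ⟨n, hnw, hnk, hagree, hlt⟩
    refine ⟨n, by omega, fun i hi => ?_, ?_⟩
    · rw [infWord_of_lt (by omega), infWord_of_lt (by omega)]
      exact hagree i hi
    · rwa [infWord_of_lt hnw, infWord_of_lt (by omega)]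
  · rintro ⟨n, hkn, hagree, hlt⟩
    refine ⟨n, by omega, by omega, fun i hi => ?_, ?_⟩
    · rw [← infWord_of_lt, ← infWord_of_lt]
      exact hagree i hi
    · rwa [infWord_of_lt (by omega), infWord_of_lt hkn] at hlt

lemma forall_prefix_infLt_iff {w : List α} :
    (∀ u : List α, u ≠ [] → u ≠ w → u <+: w → InfLt (infWord u) (infWord w)) ↔
      ∀ k, 0 < k → k < w.length → InfLt (infWord w) (shift k (infWord w)) := by
  constructor
  · intro h k hk hkw
    rw [← infLt_infWord_take_iff hk hkw.le]
    refine h _ ?_ ?_ (List.take_prefix k w)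
    · simp only [ne_eq, List.take_eq_nil_iff, not_or]
      exact ⟨hk.ne', List.ne_nil_of_length_pos (by omega)⟩
    · intro htake
      have := congrArg List.length htake
      simp only [List.length_take] at this
      omega
  · intro h u hu huw hpre
    have hlen : u.length < w.length :=
      lt_of_le_of_ne hpre.length_le fun hlen => huw (hpre.eq_of_length hlen)
    rw [List.prefix_iff_eq_take] at hpre
    rw [hpre, infLt_infWord_take_iff (List.length_pos_iff.2 hu) hlen.le]
    exact h _ (List.length_pos_iff.2 hu) hlen

lemma lt_drop_of_forall_infLt_shift {w : List α}
    (h : ∀ j, 0 < j → j < w.length → InfLt (infWord w) (shift j (infWord w)))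
    {k : ℕ} (hk : 0 < k) (hkw : k < w.length) : w < w.drop k := by
  obtain ⟨n, hn, hlt⟩ := h k hk hkw
  by_cases hkn : k + n < w.length
  · exact lt_drop_iff.2 ⟨n, hkn, hn, hlt⟩
  · have hrev := InfLt.shift_of_le hn hlt (m := w.length - k) (by omega)
    rw [shift_shift, Nat.add_sub_cancel' hkw.le, shift_length_infWord] at hrev
    exact absurd (h _ (by omega) (by omega)) hrev.asymm

/-- A word `w` with `|w| > 1` is a Lyndon word iff `u^∞ < w^∞` for every
proper non-empty prefix `u` of `w`. -/
theorem lyndon_iff_infWord_lt {α : Type*} [LinearOrder α] [Inhabited α]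
    (w : List α) (hw : 1 < w.length) :
    IsLyndon w ↔
      ∀ u : List α, u ≠ [] → u ≠ w → u <+: w → InfLt (infWord u) (infWord w) := by
  rw [isLyndon_iff_forall_lt_drop (List.ne_nil_of_length_pos (by omega)), forall_prefix_infLt_iff]
  constructor
  · intro h k hk hkw
    obtain ⟨n, -, hn, hlt⟩ := lt_drop_iff.1 (h k hk hkw)
    exact ⟨n, hn, hlt⟩
  · exact fun h k hk hkw => lt_drop_of_forall_infLt_shift h hk hkw
end

section
/- Let z be a word and a a letter such that za is a prefix of some Lyndon word, and let b be a letter with a < b. Then zb is a Lyndon word. -/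
variable {α : Type*} [LinearOrder α] [Inhabited α]

/-! A proper suffix `s ++ [b]` of `z ++ [b]` comes from the proper suffix `s ++ a :: r` of the
Lyndon word `z ++ a :: r`, which is larger than the whole word. Read the two words in parallel
along `s ++ [a]`: a strict difference met before the final `a` decides `z ++ [b]` against
`s ++ [b]` the same way; otherwise the letter of `z` facing that `a` is at most `a`, hence less
than `b`. -/

namespace List

theorem lex_append_singleton_of_lex_append_cons {α : Type*} [LinearOrder α] {a b : α}
    (hab : a < b) {r r' : List α} :
    ∀ {x y : List α}, y.length < x.length → Lex (· < ·) (x ++ a :: r) (y ++ a :: r') →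
      Lex (· < ·) (x ++ [b]) (y ++ [b])
  | [], _, hlen, _ => absurd hlen (Nat.not_lt_zero _)
  | c :: x, [], _, hlex => by
    have hca : c ≤ a := by
      rcases hlex with _ | hca | _
      exacts [hca.le, le_rfl]
    exact Lex.rel (hca.trans_lt hab)
  | c :: x, d :: y, hlen, hlex => by
    rcases hlex with _ | hcd | hlex
    · exact Lex.rel hcd
    · exact Lex.cons (lex_append_singleton_of_lex_append_cons hab (by simpa using hlen) hlex)

end List

theorem lyndon_of_prefix_succ_letter_general {α : Type*} [LinearOrder α]
    (z : List α) (a b : α) (hab : a < b)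
    (h : ∃ w : List α, IsLyndon w ∧ (z ++ [a]) <+: w) :
    IsLyndon (z ++ [b]) := by
  obtain ⟨_, ⟨-, hw⟩, r, rfl⟩ := h
  refine ⟨by simp, fun v hv hne hsuf => ?_⟩
  obtain ⟨s, rfl, hs⟩ := (List.suffix_concat_iff.mp hsuf).resolve_left hv
  have hlen : s.length < z.length :=
    lt_of_le_of_ne hs.length_le fun heq => hne (by rw [hs.eq_of_length heq])
  have hlex : List.Lex (· < ·) (z ++ a :: r) (s ++ a :: r) := by
    simp only [List.append_assoc, List.singleton_append] at hw
    refine hw _ (by simp) (fun heq => ?_) (List.suffix_append_self_iff.mpr hs)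
    exact hlen.ne (by simpa using congrArg List.length heq)
  exact List.lex_append_singleton_of_lex_append_cons hab hlen hlex

/-- If `z ++ [a]` is a prefix of some Lyndon word and `a < b`, then
`z ++ [b]` is a Lyndon word. -/
theorem lyndon_of_prefix_succ_letter {α : Type*} [LinearOrder α] [Inhabited α]
    (z : List α) (a b : α) (hab : a < b)
    (h : ∃ w : List α, IsLyndon w ∧ (z ++ [a]) <+: w) :
    IsLyndon (z ++ [b]) :=
  lyndon_of_prefix_succ_letter_general z a b hab h
end

section
/- Every Lyndon word y with |y| > 1 can be written as y = x^k z b, where x is a Lyndon word whose length equals the period of x^k z, k ≥ 1, z is a proper prefix of x, and b is a letter strictly greater than the letter a that follows z in x (i.e., za is a prefix of x and a < b). -/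
variable {α : Type*} [LinearOrder α] [Inhabited α]

/-- A word `w` has period `p` if `0 < p` and letters at distance `p` agree. -/
def IsPeriod (w : List α) (p : ℕ) : Prop :=
  0 < p ∧ ∀ i : ℕ, i + p < w.length → w.getD i default = w.getD (i + p) default

/-! Duval's argument. Every nonempty prefix of a Lyndon word `y` has the form `x^k z` with `x`
Lyndon, `k ≥ 1` and `z a` a prefix of `x`. Compare the next letter `b` of `y` with `a`: if `b < a`,
the suffix of `y` starting at `z b` would be smaller than `y`; if `b = a`, the form persists (with
`z a` in place of `z`, or `x^(k+1)` when `z a = x`); if `b > a`, the prefix `x^k z b` is itself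
Lyndon. At the last letter `b = a` is excluded as well, since `z a` would then be a border of `y`.
Finally `x^k z` has period `|x|` because `z` is a prefix of `x`, and a smaller period would be a
period of `x`, giving the Lyndon word `x` a border. -/

section Lists

omit [LinearOrder α] [Inhabited α]

theorem wpow_zero (x : List α) : wpow x 0 = [] := rfl

theorem wpow_succ (x : List α) (k : ℕ) : wpow x (k + 1) = x ++ wpow x k := by
  simp [wpow, List.replicate_succ]

theorem wpow_succ' (x : List α) (k : ℕ) : wpow x (k + 1) = wpow x k ++ x := by
  simp [wpow, List.replicate_succ']

theorem wpow_ne_nil {x : List α} (hx : x ≠ []) {k : ℕ} (hk : 1 ≤ k) : wpow x k ≠ [] := by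
  obtain ⟨j, rfl⟩ := Nat.exists_eq_add_of_le' hk
  simp [wpow_succ, hx]

theorem prefix_wpow_append {x : List α} {k : ℕ} (hk : 1 ≤ k) (s : List α) :
    x <+: wpow x k ++ s := by
  obtain ⟨j, rfl⟩ := Nat.exists_eq_add_of_le' hk
  simp [wpow_succ]

theorem exists_concat_prefix {u x : List α} (hu : u <+: x) (hux : u ≠ x) :
    ∃ a, u ++ [a] <+: x := by
  obtain ⟨_ | ⟨a, t⟩, rfl⟩ := hu
  · simp at hux
  · exact ⟨a, by simp⟩

theorem suffix_append_cases {v l₁ l₂ : List α} (h : v <:+ l₁ ++ l₂) :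
    v <:+ l₂ ∨ ∃ t, t <:+ l₁ ∧ t ≠ [] ∧ v = t ++ l₂ := by
  obtain ⟨r, hr⟩ := h
  rcases List.append_eq_append_iff.1 hr with ⟨t, rfl, rfl⟩ | ⟨t, rfl, rfl⟩
  · rcases eq_or_ne t [] with rfl | ht
    · simp
    · exact Or.inr ⟨t, List.suffix_append r t, ht, rfl⟩
  · exact Or.inl (List.suffix_append t v)

end Lists

section StrongLt

omit [Inhabited α]

theorem StrongLt.append_left {u v : List α} (h : StrongLt u v) (w : List α) :
    StrongLt (w ++ u) (w ++ v) := by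
  obtain ⟨p, s, t, a, b, hab, rfl, rfl⟩ := h
  exact ⟨w ++ p, s, t, a, b, hab, by simp, by simp⟩

theorem StrongLt.append_right {u v : List α} (h : StrongLt u v) (s t : List α) :
    StrongLt (u ++ s) (v ++ t) := by
  obtain ⟨p, s', t', a, b, hab, rfl, rfl⟩ := h
  exact ⟨p, s' ++ s, t' ++ t, a, b, hab, by simp, by simp⟩

theorem StrongLt.lt {u v : List α} (h : StrongLt u v) : u < v := by
  obtain ⟨p, s, t, a, b, hab, rfl, rfl⟩ := h
  exact List.append_left_lt (List.Lex.rel hab)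

theorem StrongLt.not_prefix {u v : List α} (h : StrongLt u v) : ¬ v <+: u := by
  obtain ⟨p, s, t, a, b, hab, rfl, rfl⟩ := h
  rintro ⟨r, hr⟩
  simp only [List.append_assoc, List.cons_append, List.append_cancel_left_eq,
    List.cons.injEq] at hr
  exact hab.ne' hr.1

theorem StrongLt.trans {u v w : List α} (huv : StrongLt u v) (hvw : StrongLt v w) :
    StrongLt u w := by
  obtain ⟨p, s, t, a, b, hab, rfl, hv⟩ := huv
  obtain ⟨q, s', t', c, d, hcd, hv', rfl⟩ := hvw
  rcases List.append_eq_append_iff.1 (hv.symm.trans hv') with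
    ⟨_ | ⟨e, r⟩, rfl, hr⟩ | ⟨_ | ⟨e, r⟩, rfl, hr⟩
  · simp only [List.nil_append, List.cons.injEq] at hr
    exact ⟨p, s, t', a, d, hab.trans (hr.1 ▸ hcd), rfl, by simp⟩
  · simp only [List.cons_append, List.cons.injEq] at hr
    exact ⟨p, s, r ++ d :: t', a, b, hab, rfl, by simp [hr.1]⟩
  · simp only [List.nil_append, List.cons.injEq] at hr
    exact ⟨q, s, t', a, d, hab.trans (hr.1 ▸ hcd), by simp, rfl⟩
  · simp only [List.cons_append, List.cons.injEq] at hr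
    exact ⟨q, r ++ a :: s, t', c, d, hcd, by simp [hr.1], rfl⟩

theorem strongLt_of_lt_of_length_le {u v : List α} (h : u < v) (hvu : v.length ≤ u.length) :
    StrongLt u v := by
  induction h with
  | nil => simp at hvu
  | @rel a u b v hab => exact ⟨[], u, v, a, b, hab, rfl, rfl⟩
  | @cons a u v _ ih => simpa using (ih (by simpa using hvu)).append_left [a]

end StrongLt

section Periods

omit [LinearOrder α]

theorem isPeriod_iff_drop_prefix {w : List α} {p : ℕ} :
    IsPeriod w p ↔ 0 < p ∧ w.drop p <+: w := by
  unfold IsPeriod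
  rw [List.prefix_iff_getElem]
  refine and_congr_right fun _ => ?_
  simp only [List.length_drop, List.getElem_drop]
  constructor
  · intro h
    refine ⟨by omega, fun i hi => ?_⟩
    have := h i (by omega)
    rw [List.getD_eq_getElem _ _ (by omega), List.getD_eq_getElem _ _ (by omega)] at this
    simp only [this, Nat.add_comm]
  · rintro ⟨_, h⟩ i hi
    rw [List.getD_eq_getElem _ _ (by omega), List.getD_eq_getElem _ _ hi, ← h i (by omega)]
    simp only [Nat.add_comm]

theorem IsPeriod.of_prefix {u w : List α} {p : ℕ} (h : IsPeriod w p) (hu : u <+: w) :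
    IsPeriod u p := by
  obtain ⟨hp, hw⟩ := isPeriod_iff_drop_prefix.1 h
  refine isPeriod_iff_drop_prefix.2 ⟨hp, ?_⟩
  exact List.prefix_of_prefix_length_le ((hu.drop p).trans hw) hu (by simp)

theorem isPeriod_wpow_append {x z : List α} (hx : x ≠ []) (hz : z <+: x) (k : ℕ) :
    IsPeriod (wpow x k ++ z) x.length := by
  refine isPeriod_iff_drop_prefix.2 ⟨List.length_pos_iff.2 hx, ?_⟩
  cases k with
  | zero => simp [wpow_zero, List.drop_eq_nil_of_le hz.length_le]
  | succ k =>
    rw [wpow_succ, List.append_assoc, List.drop_left, ← List.append_assoc, ← wpow_succ,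
      wpow_succ', List.append_assoc]
    exact (List.prefix_append_right_inj _).2 (hz.trans (List.prefix_append x z))

end Periods

section Lyndon

omit [Inhabited α]

theorem isLyndon_singleton (a : α) : IsLyndon [a] := by
  refine ⟨by simp, fun v hv0 hva hv => ?_⟩
  rcases List.suffix_cons_iff.1 hv with rfl | hv
  · exact absurd rfl hva
  · exact absurd (List.eq_nil_of_suffix_nil hv) hv0

theorem IsLyndon.strongLt_of_suffix {w v : List α} (hw : IsLyndon w) (hv : v <:+ w)
    (hv0 : v ≠ []) (hvw : v ≠ w) : StrongLt w v :=
  strongLt_of_lt_of_length_le (hw.2 v hv0 hvw hv) hv.length_le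

theorem IsLyndon.not_prefix_of_suffix {w v : List α} (hw : IsLyndon w) (hv : v <:+ w)
    (hv0 : v ≠ []) (hvw : v ≠ w) : ¬ v <+: w :=
  (hw.strongLt_of_suffix hv hv0 hvw).not_prefix

-- Comparing with `x^(k+1)` rather than with `x^k z c` itself is what survives prepending `x`.
theorem strongLt_wpow_succ_of_suffix {x z v : List α} {a c : α} (hx : IsLyndon x)
    (hz : z ++ [a] <+: x) (hac : a < c) (k : ℕ) (hv : v <:+ wpow x k ++ z ++ [c])
    (hv0 : v ≠ []) : StrongLt (wpow x (k + 1)) v := by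
  induction k generalizing v with
  | zero =>
    obtain ⟨x', rfl⟩ := hz
    rw [wpow_zero, List.nil_append] at hv
    obtain ⟨t, rfl, ht⟩ := (List.suffix_concat_iff.1 hv).resolve_left hv0
    have hsuf : t ++ a :: x' <:+ z ++ [a] ++ x' := by
      simpa using (List.suffix_append_self_iff (l₃ := a :: x')).2 ht
    have hstep : StrongLt (t ++ a :: x') (t ++ [c]) := ⟨t, x', [], a, c, hac, rfl, rfl⟩
    rw [wpow_succ, wpow_zero, List.append_nil]
    rcases eq_or_ne (t ++ a :: x') (z ++ [a] ++ x') with heq | hne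
    · rwa [← heq]
    · exact (hx.strongLt_of_suffix hsuf (by simp) hne).trans hstep
  | succ k ih =>
    rw [wpow_succ, List.append_assoc, List.append_assoc] at hv
    rcases suffix_append_cases hv with hv | ⟨t, ht, ht0, rfl⟩
    · rw [wpow_succ']
      simpa using (ih (by simpa using hv) hv0).append_right x []
    · rw [wpow_succ]
      rcases eq_or_ne t x with rfl | htx
      · simpa using (ih (List.suffix_refl _) (by simp)).append_left t
      · exact (hx.strongLt_of_suffix ht ht0 htx).append_right _ _

theorem isLyndon_wpow_append {x z : List α} {a c : α} (hx : IsLyndon x) (hz : z ++ [a] <+: x)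
    (hac : a < c) {k : ℕ} (hk : 1 ≤ k) : IsLyndon (wpow x k ++ z ++ [c]) := by
  obtain ⟨j, rfl⟩ := Nat.exists_eq_add_of_le' hk
  refine ⟨by simp, fun v hv0 hvu hv => ?_⟩
  rw [wpow_succ, List.append_assoc, List.append_assoc] at hv hvu ⊢
  rcases suffix_append_cases hv with hv | ⟨t, ht, ht0, rfl⟩
  · have := (strongLt_wpow_succ_of_suffix hx hz hac j (by simpa using hv) hv0).append_right
      (z ++ [c]) []
    simpa [wpow_succ] using this.lt
  · have htx : t ≠ x := by
      rintro rfl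
      exact hvu rfl
    exact ((hx.strongLt_of_suffix ht ht0 htx).append_right _ _).lt

theorem IsLyndon.le_of_wpow_append_prefix {y x z : List α} {k : ℕ} {a b : α}
    (hy : IsLyndon y) (hz : z ++ [a] <+: x) (hk : 1 ≤ k) (hw : wpow x k ++ z ++ [b] <+: y) :
    a ≤ b := by
  by_contra! hba
  obtain ⟨s, rfl⟩ := hw
  obtain ⟨r, hr⟩ := hz.trans (prefix_wpow_append hk (z ++ [b] ++ s))
  have hsuf : z ++ b :: s <:+ wpow x k ++ z ++ [b] ++ s := by simp
  have hne : z ++ b :: s ≠ wpow x k ++ z ++ [b] ++ s := by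
    simpa using (wpow_ne_nil (fun h => by simp [h] at hz) hk).symm
  have hlt : StrongLt (z ++ b :: s) (wpow x k ++ z ++ [b] ++ s) :=
    ⟨z, s, r, b, a, hba, rfl, by simpa using hr.symm⟩
  exact ((hy.strongLt_of_suffix hsuf (by simp) hne).trans hlt).not_prefix (List.prefix_refl _)

theorem IsLyndon.ne_of_eq_wpow_append {y x z : List α} {k : ℕ} {a b : α} (hy : IsLyndon y)
    (hz : z ++ [a] <+: x) (hk : 1 ≤ k) (hyx : y = wpow x k ++ z ++ [b]) : a ≠ b := by
  rintro rfl
  subst hyx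
  refine hy.not_prefix_of_suffix (v := z ++ [a]) (by simp) (by simp) ?_
    (by simpa using hz.trans (prefix_wpow_append hk (z ++ [a])))
  simpa using (wpow_ne_nil (fun h => by simp [h] at hz) hk).symm

theorem IsLyndon.exists_wpow_append_of_prefix {y w : List α} (hy : IsLyndon y) (hw : w <+: y)
    (hw0 : w ≠ []) : ∃ (x z : List α) (k : ℕ) (a : α),
      IsLyndon x ∧ 1 ≤ k ∧ z ++ [a] <+: x ∧ w = wpow x k ++ z := by
  have of_isLyndon : ∀ u : List α, IsLyndon u → ∃ (x z : List α) (k : ℕ) (a : α),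
      IsLyndon x ∧ 1 ≤ k ∧ z ++ [a] <+: x ∧ u = wpow x k ++ z := fun u hu => by
    obtain ⟨a, ha⟩ := exists_concat_prefix List.nil_prefix hu.1.symm
    exact ⟨u, [], 1, a, hu, le_rfl, ha, by simp [wpow]⟩
  induction w using List.reverseRecOn with
  | nil => exact absurd rfl hw0
  | append_singleton w b ih =>
    rcases eq_or_ne w [] with rfl | hw0
    · exact of_isLyndon [b] (isLyndon_singleton b)
    obtain ⟨x, z, k, a, hx, hk, hz, rfl⟩ := ih ((List.prefix_append _ _).trans hw) hw0
    rcases lt_trichotomy b a with hba | rfl | hab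
    · exact absurd (hy.le_of_wpow_append_prefix hz hk hw) hba.not_ge
    · rcases eq_or_ne (z ++ [b]) x with hzx | hzx
      · obtain ⟨a', ha'⟩ := exists_concat_prefix List.nil_prefix hx.1.symm
        exact ⟨x, [], k + 1, a', hx, by omega, ha', by simp [wpow_succ', ← hzx]⟩
      · obtain ⟨a', ha'⟩ := exists_concat_prefix hz hzx
        exact ⟨x, z ++ [b], k, a', hx, hk, ha', by simp⟩
    · exact of_isLyndon _ (isLyndon_wpow_append hx hz hab hk)

end Lyndon

theorem IsLyndon.length_le_of_isPeriod {w : List α} {p : ℕ} (hw : IsLyndon w)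
    (hp : IsPeriod w p) : w.length ≤ p := by
  by_contra! hpw
  obtain ⟨hp0, hpre⟩ := isPeriod_iff_drop_prefix.1 hp
  refine hw.not_prefix_of_suffix (List.drop_suffix p w) ?_ ?_ hpre
  · simpa using hpw
  · intro h
    have := congrArg List.length h
    simp only [List.length_drop] at this
    omega

/-- Every Lyndon word `y` with `|y| > 1` can be written `y = x^k z b` where
`x` is a Lyndon word whose length is the (smallest) period of `x^k z`,
`k ≥ 1`, `z a` is a prefix of `x` for some letter `a < b`. -/
theorem lyndon_duval_decomposition {α : Type*} [LinearOrder α] [Inhabited α]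
    (y : List α) (hy : IsLyndon y) (hlen : 1 < y.length) :
    ∃ (x z : List α) (k : ℕ) (a b : α),
      IsLyndon x ∧ 1 ≤ k ∧ (z ++ [a]) <+: x ∧ a < b ∧
      y = wpow x k ++ z ++ [b] ∧
      IsPeriod (wpow x k ++ z) x.length ∧
      (∀ p : ℕ, IsPeriod (wpow x k ++ z) p → x.length ≤ p) := by
  have hdrop : y.dropLast ≠ [] := by
    simpa [← List.length_pos_iff] using hlen
  obtain ⟨x, z, k, a, hx, hk, hz, hxz⟩ :=
    hy.exists_wpow_append_of_prefix (List.dropLast_prefix y) hdrop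
  have hyx : y = wpow x k ++ z ++ [y.getLast hy.1] := by
    rw [← hxz, List.dropLast_append_getLast]
  refine ⟨x, z, k, a, y.getLast hy.1, hx, hk, hz, ?_, hyx, ?_, fun p hp => ?_⟩
  · exact lt_of_le_of_ne (hy.le_of_wpow_append_prefix hz hk (hyx ▸ List.prefix_refl y))
      (hy.ne_of_eq_wpow_append hz hk hyx)
  · exact isPeriod_wpow_append hx.1 ((List.prefix_append z [a]).trans hz) k
  · exact hx.length_le_of_isPeriod (hp.of_prefix (prefix_wpow_append hk z))
end

section
/- Let x be a Lyndon word and let u, v be proper non-empty prefixes of x with u^∞ = v^∞ and |u| > |v|. Then for any e ≥ 1, (x^e u)^∞ < (x^e v)^∞, hence x^e u ≺ x^e v in the infinite ordering. -/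
variable {α : Type*} [LinearOrder α] [Inhabited α]

/-!
Put `d = |u| - |v|`. As `u^∞ = v^∞` and `u` is a prefix of `x`, `u = v · x[0, d)`, hence
`x^e v x = x^e u x[d, |x|)`. Since `x` is Lyndon and `x[d, |x|)` is a shorter proper suffix, the two
words differ at a letter where `x` is smaller. For `e ≥ 1`, `x^e u x` and `x^e v x` are prefixes of
`(x^e u)^∞` and `(x^e v)^∞`, which therefore first differ at that same letter.
-/

section

variable {β : Type*}

theorem List.Lex.strongLt_of_length_lt [LinearOrder β] {l₁ l₂ : List β}
    (h : List.Lex (· < ·) l₁ l₂) (hlen : l₂.length < l₁.length) : StrongLt l₁ l₂ := by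
  induction h with
  | nil => simp at hlen
  | @cons a _ _ _ ih =>
    obtain ⟨p, s, t, b, c, hbc, rfl, rfl⟩ := ih (by simpa using hlen)
    exact ⟨a :: p, s, t, b, c, hbc, rfl, rfl⟩
  | @rel a t₁ b t₂ hab => exact ⟨[], t₁, t₂, a, b, hab, rfl, rfl⟩

theorem StrongLt.append_left_s7 [LinearOrder β] {p q : List β} (h : StrongLt p q)
    (c : List β) : StrongLt (c ++ p) (c ++ q) := by
  obtain ⟨r, s, t, a, b, hab, rfl, rfl⟩ := h
  exact ⟨c ++ r, s, t, a, b, hab, by simp, by simp⟩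

theorem StrongLt.infLt [LinearOrder β] [Inhabited β] {p q : List β} {f g : ℕ → β}
    (h : StrongLt p q) (hf : ∀ i < p.length, f i = p.getD i default)
    (hg : ∀ i < q.length, g i = q.getD i default) : InfLt f g := by
  obtain ⟨r, s, t, a, b, hab, rfl, rfl⟩ := h
  refine ⟨r.length, fun i hi => ?_, ?_⟩
  · rw [hf i (by simp; omega), hg i (by simp; omega), List.getD_append _ _ _ _ hi,
      List.getD_append _ _ _ _ hi]
  · rw [hf _ (by simp), hg _ (by simp)]
    simpa using hab

theorem IsLyndon.strongLt_drop [LinearOrder β] {x : List β} (hx : IsLyndon x)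
    {d : ℕ} (hd : 0 < d) (hdx : d < x.length) : StrongLt x (x.drop d) := by
  have hlen : (x.drop d).length = x.length - d := List.length_drop
  refine (hx.2 _ ?_ ?_ (List.drop_suffix _ _)).strongLt_of_length_lt (by omega)
  · rw [← List.length_pos_iff]; omega
  · intro h; rw [h] at hlen; omega

theorem prefix_wpow_append_s7 {x : List β} {e : ℕ} (he : 1 ≤ e) (w : List β) :
    x <+: wpow x e ++ w := by
  obtain ⟨e, rfl⟩ := Nat.exists_eq_add_of_le' he
  simp only [wpow, List.replicate_succ, List.flatten_cons, List.append_assoc]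
  exact List.prefix_append _ _

theorem infWord_eq_getD_of_lt [Inhabited β] {w : List β} {i : ℕ} (hi : i < w.length) :
    infWord w i = w.getD i default := by
  rw [infWord, Nat.mod_eq_of_lt hi]

theorem infWord_add_length [Inhabited β] (w : List β) (i : ℕ) :
    infWord w (w.length + i) = infWord w i := by
  simp only [infWord, Nat.add_mod_left]

theorem infWord_eq_getD_of_prefix [Inhabited β] {w p : List β} (hp : p <+: w ++ w) :
    ∀ i < p.length, infWord w i = p.getD i default := by
  intro i hi
  have hi' : i < (w ++ w).length := lt_of_lt_of_le hi hp.length_le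
  rw [List.getD_eq_getElem _ _ hi, hp.getElem hi, ← List.getD_eq_getElem _ default hi']
  rcases lt_or_ge i w.length with h | h
  · rw [infWord_eq_getD_of_lt h, List.getD_append _ _ _ _ h]
  · obtain ⟨k, rfl⟩ := Nat.exists_eq_add_of_le h
    rw [infWord_add_length, List.getD_append_right _ _ _ _ h, Nat.add_sub_cancel_left,
      infWord_eq_getD_of_lt (by simp at hi'; omega)]

theorem eq_append_take_of_infWord_eq [Inhabited β] {u v : List β}
    (heq : infWord u = infWord v) (hlen : v.length ≤ u.length) :
    u = v ++ u.take (u.length - v.length) := by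
  have hu : ∀ i (hi : i < u.length), u[i] = infWord v i := fun i hi => by
    rw [← heq, infWord_eq_getD_of_lt hi, List.getD_eq_getElem]
  refine List.ext_getElem (by simp; omega) fun i hi _ => ?_
  rw [List.getElem_append, hu i hi]
  split_ifs with hiv
  · rw [infWord_eq_getD_of_lt hiv, List.getD_eq_getElem]
  · rw [List.getElem_take, hu _ (by omega), ← infWord_add_length v (i - v.length),
      Nat.add_sub_cancel' (by omega)]

end

theorem claim1_equal_powers_general {α : Type*} [LinearOrder α] [Inhabited α]
    (x u v : List α) (hx : IsLyndon x)
    (hupx : u <+: x)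
    (hv : v ≠ [])
    (heq : infWord u = infWord v) (hlen : v.length < u.length) :
    ∀ e : ℕ, 1 ≤ e →
      InfLt (infWord (wpow x e ++ u)) (infWord (wpow x e ++ v)) ∧
      Prec (wpow x e ++ u) (wpow x e ++ v) := by
  intro e he
  set d := u.length - v.length
  have hd : 0 < d := by omega
  have hdx : d < x.length := by
    have := List.length_pos_iff.mpr hv
    have := hupx.length_le
    omega
  have htake : u.take d = x.take d := by
    obtain ⟨r, rfl⟩ := hupx
    exact (List.take_append_of_le_length (by omega)).symm
  have hu : u = v ++ x.take d := htake ▸ eq_append_take_of_infWord_eq heq hlen.le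
  have hvx : wpow x e ++ v ++ x = wpow x e ++ u ++ x.drop d := by
    rw [hu, List.append_assoc, List.append_assoc, List.append_assoc, List.take_append_drop]
  have hlt : StrongLt (wpow x e ++ u ++ x) (wpow x e ++ v ++ x) :=
    hvx ▸ (hx.strongLt_drop hd hdx).append_left_s7 _
  have hinf := hlt.infLt
    (infWord_eq_getD_of_prefix ((List.prefix_append_right_inj _).mpr (prefix_wpow_append_s7 he u)))
    (infWord_eq_getD_of_prefix ((List.prefix_append_right_inj _).mpr (prefix_wpow_append_s7 he v)))
  exact ⟨hinf, Or.inl hinf⟩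

/-- Claim 1, first case: for proper non-empty prefixes `u, v` of a Lyndon
word `x` with `u^∞ = v^∞` and `|u| > |v|`, one has
`(x^e u)^∞ < (x^e v)^∞` for all `e ≥ 1`, hence `x^e u ≺ x^e v`. -/
theorem claim1_equal_powers {α : Type*} [LinearOrder α] [Inhabited α]
    (x u v : List α) (hx : IsLyndon x)
    (hu : u ≠ []) (hu' : u ≠ x) (hupx : u <+: x)
    (hv : v ≠ []) (hv' : v ≠ x) (hvpx : v <+: x)
    (heq : infWord u = infWord v) (hlen : v.length < u.length) :
    ∀ e : ℕ, 1 ≤ e →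
      InfLt (infWord (wpow x e ++ u)) (infWord (wpow x e ++ v)) ∧
      Prec (wpow x e ++ u) (wpow x e ++ v) :=
  claim1_equal_powers_general x u v hx hupx hv heq hlen
end

section
/- If r is a proper non-empty prefix of a Lyndon word x and s is the proper non-empty suffix of x of the same length, then r is strongly less than s (there exist words p and letters a < b with r = p a r' and s = p b s'). -/
variable {α : Type*} [LinearOrder α] [Inhabited α]

/-!
A proper non-empty suffix `s` of the Lyndon word `x` is lexicographically larger than `x`.
Since `s` is shorter than `x`, it is not an extension of `x`, so `x` and `s` first differ at a
position `i < |s|`, with the smaller letter in `x`. That position lies inside the prefix `r` of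
`x` of length `|s|`, which therefore differs from `s` in the same way.
-/

omit [Inhabited α]

theorem List.Lex.strongLt_of_length_le {u v : List α} (h : List.Lex (· < ·) u v)
    (hlen : v.length ≤ u.length) : StrongLt u v := by
  induction h with
  | nil => simp at hlen
  | rel hab => exact ⟨[], _, _, _, _, hab, rfl, rfl⟩
  | @cons c _ _ _ ih =>
    obtain ⟨p, s, t, a, b, hab, rfl, rfl⟩ := ih (by simpa using hlen)
    exact ⟨c :: p, s, t, a, b, hab, rfl, rfl⟩

theorem StrongLt.of_prefix_left {u v r : List α} (h : StrongLt u v) (hr : r <+: u)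
    (hlen : v.length ≤ r.length) : StrongLt r v := by
  obtain ⟨p, s, t, a, b, hab, rfl, rfl⟩ := h
  obtain ⟨k, hk⟩ : ∃ k, r.length = p.length + (k + 1) :=
    ⟨r.length - p.length - 1, by simp only [List.length_append, List.length_cons] at hlen; omega⟩
  refine ⟨p, s.take k, t, a, b, hab, ?_, rfl⟩
  rw [List.prefix_iff_eq_take.mp hr, List.take_append, List.take_of_length_le (by omega), hk,
    Nat.add_sub_cancel_left, List.take_succ_cons]

theorem prefix_strongLt_suffix_general {α : Type*} [LinearOrder α]
    (x r s : List α) (hx : IsLyndon x)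
    (hr : r ≠ []) (hr' : r ≠ x) (hrpx : r <+: x)
    (hs : s <:+ x) (hlen : s.length = r.length) :
    StrongLt r s := by
  have hrx : r.length < x.length :=
    lt_of_le_of_ne hrpx.length_le fun h => hr' (hrpx.eq_of_length h)
  have hs_ne_nil : s ≠ [] := by
    rw [← List.length_pos_iff, hlen]
    exact List.length_pos_iff.mpr hr
  have hs_ne_x : s ≠ x := by
    rintro rfl
    omega
  have hxs : List.Lex (· < ·) x s := hx.2 s hs_ne_nil hs_ne_x hs
  exact (hxs.strongLt_of_length_le (by omega)).of_prefix_left hrpx hlen.le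

/-- If `r` is a proper non-empty prefix of a Lyndon word `x` and `s` is the
suffix of `x` of the same length, then `r` is strongly less than `s`. -/
theorem prefix_strongLt_suffix {α : Type*} [LinearOrder α] [Inhabited α]
    (x r s : List α) (hx : IsLyndon x)
    (hr : r ≠ []) (hr' : r ≠ x) (hrpx : r <+: x)
    (hs : s <:+ x) (hlen : s.length = r.length) :
    StrongLt r s :=
  prefix_strongLt_suffix_general x r s hx hr hr' hrpx hs hlen
end
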